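/- arXiv:1310.0670 — 3 statements merged into one kernel-verified Lean document; each statement's English description precedes it below -/
import Mathlib

section
/- Let X ⊆ α^ℤ be a subshift with B^∞ ∈ X, and let Φ : X → X be a cellular automaton (a continuous map commuting with the shift) such that Φ(B^∞) = B^∞. Then Φ is uniquely ergodic if and only if d_Φ(B, x) = 1 holds for all x ∈ X. Moreover, if this is the case, then the convergence of (1/n)·|{t ∈ [0, n−1] : Φ^t(x)_0 = B}| to 1 is uniform in x ∈ X. -/
/-!
The fixed point `B^∞` carries the invariant measure `δ_{B^∞}`, so `Φ` is uniquely ergodic exactly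
when every invariant probability measure is `δ_{B^∞}`.

If the density of `B` at the origin is `1` along every orbit, then, since `Φ` commutes with the
shift, it is `1` at every coordinate `k`. Integrating the Birkhoff averages of the indicator of the
cylinder `{x_k = B}` against an invariant measure `μ` (dominated convergence) gives
`μ {x_k = B} = 1` for all `k`, hence `μ = δ_{B^∞}`.

Conversely, if the averages did not converge to `1` uniformly, the empirical measures of a
sequence of bad orbit segments would have a weak limit point (the space of measures of mass at most
`1` on the compact space `X` is compact). Such a limit point is invariant (Krylov–Bogolyubov) and
gives mass less than `1` to the clopen set `{x_0 = B}`, so it differs from `δ_{B^∞}`.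
-/

open MeasureTheory Filter Topology Set Function
open scoped ENNReal NNReal BoundedContinuousFunction

theorem tendsto_of_liminf_eq_of_abs_le {u : ℕ → ℝ} {a : ℝ} (hu : ∀ n, |u n| ≤ a)
    (h : liminf u atTop = a) : Tendsto u atTop (𝓝 a) := by
  have hbdd : IsBoundedUnder (· ≥ ·) atTop u :=
    isBoundedUnder_of ⟨-a, fun n ↦ (abs_le.1 (hu n)).1⟩
  exact tendsto_of_le_liminf_of_limsup_le h.ge
    (limsup_le_of_le hbdd.isCoboundedUnder_le (Eventually.of_forall fun n ↦ (abs_le.1 (hu n)).2))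
    (isBoundedUnder_of ⟨a, fun n ↦ (abs_le.1 (hu n)).2⟩) hbdd

section BirkhoffAverage

variable {Y : Type*}

theorem birkhoffAverage_comp_apply {E : Type*} [AddCommMonoid E] [Module ℝ E]
    (Φ : Y → Y) (g : Y → E) (n : ℕ) (x : Y) :
    birkhoffAverage ℝ Φ (g ∘ Φ) n x = birkhoffAverage ℝ Φ g n (Φ x) := by
  simp only [birkhoffAverage, birkhoffSum, comp_apply, ← iterate_succ_apply' Φ,
    iterate_succ_apply]

theorem norm_birkhoffAverage_le {E : Type*} [NormedAddCommGroup E] [NormedSpace ℝ E]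
    (Φ : Y → Y) {g : Y → E} {C : ℝ} (hg : ∀ y, ‖g y‖ ≤ C) (n : ℕ) (x : Y) :
    ‖birkhoffAverage ℝ Φ g n x‖ ≤ C := by
  rcases eq_or_ne n 0 with rfl | hn
  · simpa using (norm_nonneg _).trans (hg x)
  have hn' : (0 : ℝ) < n := by positivity
  calc ‖birkhoffAverage ℝ Φ g n x‖ ≤ (n : ℝ)⁻¹ * ∑ k ∈ Finset.range n, ‖g (Φ^[k] x)‖ := by
        rw [birkhoffAverage, norm_smul, norm_inv, Real.norm_natCast]
        gcongr
        exact norm_sum_le _ _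
    _ ≤ (n : ℝ)⁻¹ * (n * C) := by
        gcongr
        simpa using Finset.sum_le_sum fun k (_ : k ∈ Finset.range n) ↦ hg (Φ^[k] x)
    _ = C := by field_simp

theorem abs_birkhoffAverage_indicator_le_one (Φ : Y → Y) (s : Set Y) (n : ℕ) (x : Y) :
    |birkhoffAverage ℝ Φ (s.indicator (1 : Y → ℝ)) n x| ≤ 1 :=
  have hs : ∀ y, ‖s.indicator (1 : Y → ℝ) y‖ ≤ 1 := fun y ↦ by
    by_cases hy : y ∈ s <;> simp [hy]
  norm_birkhoffAverage_le Φ hs n x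

theorem birkhoffAverage_indicator_one (Φ : Y → Y) (s : Set Y) [DecidablePred (· ∈ s)]
    (n : ℕ) (x : Y) :
    birkhoffAverage ℝ Φ (s.indicator (1 : Y → ℝ)) n x =
      (({k ∈ Finset.range n | Φ^[k] x ∈ s}).card : ℝ) / n := by
  rw [Finset.natCast_card_filter]
  simp [birkhoffAverage, birkhoffSum, Set.indicator_apply, div_eq_inv_mul]

theorem tendsto_birkhoffAverage_apply_sub_birkhoffAverage_of_isBounded {E : Type*}
    [NormedAddCommGroup E] [NormedSpace ℝ E] {g : Y → E} (hg : Bornology.IsBounded (range g))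
    (Φ : Y → Y) (x : ℕ → Y) :
    Tendsto (fun n ↦ birkhoffAverage ℝ Φ g n (Φ (x n)) - birkhoffAverage ℝ Φ g n (x n))
      atTop (𝓝 0) := by
  obtain ⟨C, hC⟩ := Metric.isBounded_range_iff.1 hg
  refine squeeze_zero_norm (fun n ↦ ?_)
    ((tendsto_const_nhds (x := C)).div_atTop tendsto_natCast_atTop_atTop)
  rw [← dist_eq_norm, dist_birkhoffAverage_apply_birkhoffAverage]
  gcongr
  exact hC _ _

end BirkhoffAverage

section EmpiricalMeasure

variable {Y : Type*} [MeasurableSpace Y]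

/-- For `n = 0` this is the zero measure, which is why its limit points are taken among finite
measures rather than probability measures. -/
noncomputable def empiricalMeasure (Φ : Y → Y) (x : Y) (n : ℕ) : Measure Y :=
  (n : ℝ≥0)⁻¹ • ∑ k ∈ Finset.range n, Measure.dirac (Φ^[k] x)

instance (Φ : Y → Y) (x : Y) (n : ℕ) : IsFiniteMeasure (empiricalMeasure Φ x n) := by
  unfold empiricalMeasure
  infer_instance

theorem integral_empiricalMeasure [MeasurableSingletonClass Y] {E : Type*} [NormedAddCommGroup E]
    [NormedSpace ℝ E] [CompleteSpace E] (Φ : Y → Y) (x : Y) (n : ℕ) (g : Y → E) :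
    ∫ y, g y ∂empiricalMeasure Φ x n = birkhoffAverage ℝ Φ g n x := by
  rw [empiricalMeasure, integral_smul_nnreal_measure, integral_finsetSum_measure
    fun k _ ↦ integrable_dirac enorm_lt_top]
  simp [birkhoffAverage, birkhoffSum, NNReal.smul_def]

theorem empiricalMeasure_univ_le_one (Φ : Y → Y) (x : Y) (n : ℕ) :
    empiricalMeasure Φ x n univ ≤ 1 := by
  rcases eq_or_ne n 0 with rfl | hn
  · simp [empiricalMeasure]
  · have : ((n : ℝ≥0)⁻¹ * n : ℝ≥0) = 1 := inv_mul_cancel₀ (by exact_mod_cast hn)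
    simp only [empiricalMeasure, Measure.smul_apply, Measure.coe_finsetSum, Finset.sum_apply,
      measure_univ, Finset.sum_const, Finset.card_range, nsmul_eq_mul, mul_one]
    rw [ENNReal.smul_def, smul_eq_mul, ← ENNReal.coe_natCast, ← ENNReal.coe_mul, this]
    simp

theorem isProbabilityMeasure_of_tendsto_birkhoffAverage_one {Φ : Y → Y} {x : ℕ → Y}
    {l : Filter ℕ} [l.NeBot] (hl : l ≤ atTop) {μ : Measure Y} [IsFiniteMeasure μ]
    (hμ : Tendsto (fun n ↦ birkhoffAverage ℝ Φ (1 : Y → ℝ) n (x n)) l (𝓝 (∫ _, 1 ∂μ))) :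
    IsProbabilityMeasure μ := by
  have hone : ∀ᶠ n in l, birkhoffAverage ℝ Φ (1 : Y → ℝ) n (x n) = 1 := by
    filter_upwards [hl (eventually_ne_atTop 0)] with n hn
    rw [birkhoffAverage_of_comp_eq (R := ℝ) rfl (Nat.cast_ne_zero.2 hn), Pi.one_apply]
  have h := tendsto_nhds_unique hμ (tendsto_const_nhds.congr' (EventuallyEq.symm hone))
  rw [integral_const, smul_eq_mul, mul_one, measureReal_def, ENNReal.toReal_eq_one_iff] at h
  exact ⟨h⟩

end EmpiricalMeasure

section KrylovBogolyubov

variable {Y : Type*} [TopologicalSpace Y] [MeasurableSpace Y] [BorelSpace Y]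

theorem exists_tendsto_birkhoffAverage_integral [T2Space Y] [CompactSpace Y] (Φ : Y → Y)
    (x : ℕ → Y) (l : Ultrafilter ℕ) :
    ∃ μ : Measure Y, IsFiniteMeasure μ ∧ ∀ g : Y →ᵇ ℝ,
      Tendsto (fun n ↦ birkhoffAverage ℝ Φ g n (x n)) l (𝓝 (∫ y, g y ∂μ)) := by
  let ν : ℕ → FiniteMeasure Y := fun n ↦ ⟨empiricalMeasure Φ (x n) n, inferInstance⟩
  have hν : ∀ n, (ν n).mass ≤ 1 := fun n ↦ by
    rw [← ENNReal.coe_le_coe, FiniteMeasure.ennreal_mass]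
    exact empiricalMeasure_univ_le_one Φ (x n) n
  obtain ⟨μ, -, hμ⟩ :=
    (isCompact_setOfPred_finiteMeasure_le_of_compactSpace Y 1).ultrafilter_le_nhds (l.map ν)
      (by rw [Ultrafilter.coe_map, le_principal_iff]; exact mem_map.2 (univ_mem' hν))
  refine ⟨μ, inferInstance, fun g ↦ ?_⟩
  simpa [ν, integral_empiricalMeasure] using
    FiniteMeasure.tendsto_iff_forall_integral_tendsto.1 hμ g

theorem measurePreserving_of_tendsto_birkhoffAverage [HasOuterApproxClosed Y] {Φ : Y → Y}
    (hΦ : Continuous Φ) {x : ℕ → Y} {l : Filter ℕ} [l.NeBot] (hl : l ≤ atTop) {μ : Measure Y}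
    [IsFiniteMeasure μ]
    (hμ : ∀ g : Y →ᵇ ℝ, Tendsto (fun n ↦ birkhoffAverage ℝ Φ g n (x n)) l (𝓝 (∫ y, g y ∂μ))) :
    MeasurePreserving Φ μ μ := by
  refine ⟨hΦ.measurable, ext_of_forall_integral_eq_of_IsFiniteMeasure fun g ↦ ?_⟩
  rw [integral_map hΦ.aemeasurable g.continuous.aestronglyMeasurable]
  have hshift := (tendsto_birkhoffAverage_apply_sub_birkhoffAverage_of_isBounded
    g.isBounded_range Φ x).mono_left hl
  refine tendsto_nhds_unique (hμ (g.compContinuous ⟨Φ, hΦ⟩)) ?_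
  simpa [BoundedContinuousFunction.coe_compContinuous, birkhoffAverage_comp_apply] using
    (hμ g).add hshift

theorem exists_measurePreserving_tendsto_birkhoffAverage [TopologicalSpace.MetrizableSpace Y]
    [CompactSpace Y] {Φ : Y → Y} (hΦ : Continuous Φ) (x : ℕ → Y) (l : Ultrafilter ℕ)
    (hl : (l : Filter ℕ) ≤ atTop) :
    ∃ μ : Measure Y, IsProbabilityMeasure μ ∧ MeasurePreserving Φ μ μ ∧ ∀ g : Y →ᵇ ℝ,
      Tendsto (fun n ↦ birkhoffAverage ℝ Φ g n (x n)) l (𝓝 (∫ y, g y ∂μ)) := by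
  obtain ⟨μ, _, hμ⟩ := exists_tendsto_birkhoffAverage_integral Φ x l
  exact ⟨μ, isProbabilityMeasure_of_tendsto_birkhoffAverage_one hl (hμ 1),
    measurePreserving_of_tendsto_birkhoffAverage hΦ hl hμ, hμ⟩

theorem tendstoUniformly_birkhoffAverage_of_forall_integral_eq
    [TopologicalSpace.MetrizableSpace Y] [CompactSpace Y] {Φ : Y → Y} (hΦ : Continuous Φ)
    (g : Y →ᵇ ℝ) {c : ℝ}
    (hc : ∀ μ : Measure Y, IsProbabilityMeasure μ → MeasurePreserving Φ μ μ → ∫ y, g y ∂μ = c) :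
    TendstoUniformly (birkhoffAverage ℝ Φ g) (fun _ ↦ c) atTop := by
  rw [Metric.tendstoUniformly_iff]
  intro ε hε
  by_contra hbad
  let bad : ℕ → Y → Prop := fun n y ↦ ε ≤ dist c (birkhoffAverage ℝ Φ g n y)
  have hfreq : ∃ᶠ n in atTop, ∃ y, bad n y := by simpa [bad] using not_eventually.1 hbad
  obtain ⟨-, y₀, -⟩ := hfreq.exists
  have : Nonempty Y := ⟨y₀⟩
  have := frequently_iff_neBot.1 hfreq
  obtain ⟨l, hl⟩ := Ultrafilter.exists_le (atTop ⊓ 𝓟 {n | ∃ y, bad n y})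
  let x : ℕ → Y := fun n ↦ Classical.epsilon (bad n)
  obtain ⟨μ, hμ, hΦμ, hlim⟩ :=
    exists_measurePreserving_tendsto_birkhoffAverage hΦ x l (hl.trans inf_le_left)
  have hnear := hlim g
  rw [hc μ hμ hΦμ] at hnear
  obtain ⟨n, hn, hfar⟩ := ((hnear.eventually (Metric.ball_mem_nhds c hε)).and
    (hl.trans inf_le_right (mem_principal_self _))).exists
  exact (Classical.epsilon_spec hfar).not_gt (by rwa [dist_comm])

end KrylovBogolyubov

section InvariantMeasure

variable {Y : Type*} [MeasurableSpace Y] {Φ : Y → Y} {μ : Measure Y}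

theorem MeasureTheory.MeasurePreserving.integral_birkhoffAverage (hΦ : MeasurePreserving Φ μ μ)
    {g : Y → ℝ} (hg : Integrable g μ) {n : ℕ} (hn : n ≠ 0) :
    ∫ x, birkhoffAverage ℝ Φ g n x ∂μ = ∫ x, g x ∂μ := by
  have hcomp : ∀ k, ∫ x, g (Φ^[k] x) ∂μ = ∫ x, g x ∂μ := fun k ↦ by
    have hgk : AEStronglyMeasurable g (μ.map Φ^[k]) := by
      rw [(hΦ.iterate k).map_eq]
      exact hg.aestronglyMeasurable
    rw [← integral_map (hΦ.iterate k).aemeasurable hgk, (hΦ.iterate k).map_eq]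
  simp only [birkhoffAverage, birkhoffSum, smul_eq_mul]
  rw [integral_const_mul, integral_finsetSum _ (f := fun k x ↦ g (Φ^[k] x))
    fun k _ ↦ (hΦ.iterate k).integrable_comp_of_integrable hg]
  simp [hcomp, hn]

theorem MeasureTheory.MeasurePreserving.integral_eq_of_tendsto_birkhoffAverage
    [TopologicalSpace Y] [OpensMeasurableSpace Y] [IsProbabilityMeasure μ]
    (hΦ : MeasurePreserving Φ μ μ) (g : Y →ᵇ ℝ) {c : ℝ}
    (hc : ∀ x, Tendsto (fun n ↦ birkhoffAverage ℝ Φ g n x) atTop (𝓝 c)) :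
    ∫ x, g x ∂μ = c := by
  have hmeas : ∀ n, AEStronglyMeasurable (birkhoffAverage ℝ Φ g n) μ := fun n ↦ by
    unfold birkhoffAverage birkhoffSum
    exact (Finset.measurable_sum _ fun k _ ↦ g.continuous.measurable.comp
      (hΦ.measurable.iterate k)).const_smul ((n : ℝ)⁻¹) |>.aestronglyMeasurable
  have hlim := tendsto_integral_of_dominated_convergence (fun _ ↦ ‖g‖) hmeas
    (integrable_const _)
    (fun n ↦ Eventually.of_forall (norm_birkhoffAverage_le Φ g.norm_coe_le_norm n))
    (Eventually.of_forall hc)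
  rw [integral_const, probReal_univ, one_smul] at hlim
  refine tendsto_nhds_unique (tendsto_const_nhds.congr' ?_) hlim
  filter_upwards [eventually_ne_atTop 0] with n hn
  exact (hΦ.integral_birkhoffAverage (g.integrable μ) hn).symm

theorem MeasureTheory.MeasurePreserving.ae_mem_of_tendsto_birkhoffAverage_indicator
    [TopologicalSpace Y] [OpensMeasurableSpace Y] [IsProbabilityMeasure μ]
    (hΦ : MeasurePreserving Φ μ μ) {s : Set Y} (hs : IsClopen s)
    (h : ∀ x, Tendsto (fun n ↦ birkhoffAverage ℝ Φ (s.indicator (1 : Y → ℝ)) n x) atTop (𝓝 1)) :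
    ∀ᵐ y ∂μ, y ∈ s := by
  have hint := hΦ.integral_eq_of_tendsto_birkhoffAverage (.indicator s hs) h
  simp only [BoundedContinuousFunction.indicator_apply] at hint
  rw [integral_indicator_one hs.isOpen.measurableSet, measureReal_def,
    ENNReal.toReal_eq_one_iff, ← measure_univ (μ := μ)] at hint
  exact (ae_mem_iff_measure_eq hs.isOpen.measurableSet.nullMeasurableSet).2 hint

theorem measurePreserving_iff_forall_measure_preimage (hΦ : Measurable Φ) :
    MeasurePreserving Φ μ μ ↔ ∀ A, MeasurableSet A → μ (Φ ⁻¹' A) = μ A :=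
  ⟨fun h A hA ↦ h.measure_preimage hA.nullMeasurableSet,
    fun h ↦ ⟨hΦ, Measure.ext fun A hA ↦ by rw [Measure.map_apply hΦ hA, h A hA]⟩⟩

theorem Function.IsFixedPt.measurePreserving_dirac (hΦ : Measurable Φ) {p : Y}
    (hp : IsFixedPt Φ p) : MeasurePreserving Φ (Measure.dirac p) (Measure.dirac p) :=
  ⟨hΦ, by rw [Measure.map_dirac' hΦ, hp]⟩

theorem existsUnique_measurePreserving_iff_of_isFixedPt (hΦ : Measurable Φ) {p : Y}
    (hp : IsFixedPt Φ p) :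
    (∃! μ : Measure Y, IsProbabilityMeasure μ ∧ MeasurePreserving Φ μ μ) ↔
      ∀ μ : Measure Y, IsProbabilityMeasure μ → MeasurePreserving Φ μ μ →
        μ = Measure.dirac p := by
  have hdirac : IsProbabilityMeasure (Measure.dirac p) ∧
      MeasurePreserving Φ (Measure.dirac p) (Measure.dirac p) :=
    ⟨inferInstance, hp.measurePreserving_dirac hΦ⟩
  exact ⟨fun ⟨_, _, huniq⟩ μ hμ hΦμ ↦ (huniq μ ⟨hμ, hΦμ⟩).trans (huniq _ hdirac).symm,
    fun h ↦ ⟨_, hdirac, fun μ hμ ↦ h μ hμ.1 hμ.2⟩⟩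

theorem eq_dirac_of_ae_eq [MeasurableSingletonClass Y] [IsProbabilityMeasure μ] {p : Y}
    (h : ∀ᵐ y ∂μ, y = p) : μ = Measure.dirac p := by
  have hp : μ {p} = 1 := by
    rw [← measure_univ (μ := μ)]
    exact (ae_iff_measure_eq (measurableSet_singleton p).nullMeasurableSet).1 h
  calc μ = μ.restrict {p} := (Measure.restrict_eq_self_of_ae_mem h).symm
    _ = Measure.dirac p := by rw [Measure.restrict_singleton, hp, one_smul]

end InvariantMeasure

section Subshift

variable {α : Type*} {X : Set (ℤ → α)} (hX : (fun x : ℤ → α ↦ fun i ↦ x (i + 1)) '' X = X)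

def shiftOn : X → X :=
  fun y ↦ ⟨fun i ↦ (y : ℤ → α) (i + 1), hX.subset (mem_image_of_mem _ y.2)⟩

theorem coe_shiftOn_iterate_apply (m : ℕ) (y : X) (i : ℤ) :
    ((shiftOn hX)^[m] y : ℤ → α) i = (y : ℤ → α) (i + m) := by
  induction m generalizing y with
  | zero => simp
  | succ m ih =>
    rw [iterate_succ_apply, ih]
    simp only [shiftOn, Nat.cast_succ]
    ring_nf

theorem shiftOn_surjective : Surjective (shiftOn hX) := fun y ↦ by
  obtain ⟨z, hz, hzy⟩ : (y : ℤ → α) ∈ (fun x : ℤ → α ↦ fun i ↦ x (i + 1)) '' X := by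
    rw [hX]
    exact y.2
  exact ⟨⟨z, hz⟩, Subtype.ext hzy⟩

variable {Φ : X → X} (hΦ : ∀ x y : X, ((y : ℤ → α) = fun i ↦ (x : ℤ → α) (i + 1)) →
    ((Φ y : ℤ → α) = fun i ↦ (Φ x : ℤ → α) (i + 1)))
include hX hΦ

theorem commute_shiftOn : Function.Commute Φ (shiftOn hX) := fun y ↦ Subtype.ext (hΦ y _ rfl)

/-- Negative coordinates are reached through the surjectivity of the shift. -/
theorem exists_forall_iterate_apply_zero_eq (z : X) (k : ℤ) :
    ∃ w : X, ∀ t, (Φ^[t] w : ℤ → α) 0 = (Φ^[t] z : ℤ → α) k := by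
  have hcomm : ∀ t m, Function.Commute Φ^[t] (shiftOn hX)^[m] :=
    fun t m ↦ (commute_shiftOn hX hΦ).iterate_iterate t m
  obtain ⟨m, rfl | rfl⟩ := k.eq_nat_or_neg
  · exact ⟨(shiftOn hX)^[m] z, fun t ↦ by rw [(hcomm t m).eq, coe_shiftOn_iterate_apply, zero_add]⟩
  · obtain ⟨w, rfl⟩ := (shiftOn_surjective hX).iterate m z
    exact ⟨w, fun t ↦ by rw [(hcomm t m).eq, coe_shiftOn_iterate_apply, neg_add_cancel]⟩

theorem exists_birkhoffAverage_cylinder_eq (B : α) (z : X) (k : ℤ) :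
    ∃ w : X, ∀ n,
      birkhoffAverage ℝ Φ ({y : X | (y : ℤ → α) k = B}.indicator (1 : X → ℝ)) n z =
        birkhoffAverage ℝ Φ ({y : X | (y : ℤ → α) 0 = B}.indicator (1 : X → ℝ)) n w := by
  obtain ⟨w, hw⟩ := exists_forall_iterate_apply_zero_eq hX hΦ z k
  refine ⟨w, fun n ↦ congrArg _ (Finset.sum_congr rfl fun t _ ↦ ?_)⟩
  exact Set.indicator_eq_indicator (by simp [hw t]) rfl

theorem MeasureTheory.MeasurePreserving.eq_dirac_of_liminf_birkhoffAverage_cylinder_eq_one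
    [TopologicalSpace α] [DiscreteTopology α] [Countable α] [MeasurableSpace α] [BorelSpace α]
    {B : α} (hB : (fun _ ↦ B) ∈ X) {μ : Measure X} [IsProbabilityMeasure μ]
    (hΦμ : MeasurePreserving Φ μ μ)
    (h : ∀ x, liminf (fun n ↦ birkhoffAverage ℝ Φ
      ({y : X | (y : ℤ → α) 0 = B}.indicator (1 : X → ℝ)) n x) atTop = 1) :
    μ = Measure.dirac ⟨fun _ ↦ B, hB⟩ := by
  have hU1 : ∀ k, ∀ᵐ y ∂μ, y ∈ {y : X | (y : ℤ → α) k = B} := fun k ↦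
    hΦμ.ae_mem_of_tendsto_birkhoffAverage_indicator
      ((isClopen_discrete {B}).preimage ((continuous_apply k).comp continuous_subtype_val))
      fun z ↦ by
        obtain ⟨w, hw⟩ := exists_birkhoffAverage_cylinder_eq hX hΦ B z k
        exact (tendsto_of_liminf_eq_of_abs_le (abs_birkhoffAverage_indicator_le_one Φ _ · w)
          (h w)).congr fun n ↦ (hw n).symm
  refine eq_dirac_of_ae_eq ?_
  filter_upwards [ae_all_iff.2 hU1] with y hy
  exact Subtype.ext (funext hy)

end Subshift

/-- Let `X ⊆ α^ℤ` be a subshift containing `B^∞`, and `Φ : X → X` a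
cellular automaton on `X` fixing `B^∞`.  Then `Φ` is uniquely ergodic iff
`d_Φ(B, x) = 1` (the lower asymptotic density of times the origin is in state `B`)
for every `x ∈ X`; and in that case the convergence is uniform in `x`. -/
theorem uniquelyErgodic_iff_blank_density_one_subshift
    {α : Type} [Fintype α] [DecidableEq α] [TopologicalSpace α] [DiscreteTopology α]
    [MeasurableSpace α] [BorelSpace α]
    (B : α) (X : Set (ℤ → α))
    (hXclosed : IsClosed X)
    (hXshift : (fun x : ℤ → α => fun i => x (i + 1)) '' X = X)
    (hBX : (fun _ : ℤ => B) ∈ X)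
    (Φ : X → X)
    (hcont : Continuous Φ)
    (hcomm : ∀ x y : X, ((y : ℤ → α) = fun i => (x : ℤ → α) (i + 1)) →
        ((Φ y : ℤ → α) = fun i => (Φ x : ℤ → α) (i + 1)))
    (hq : (Φ ⟨fun _ => B, hBX⟩ : ℤ → α) = fun _ => B) :
    ((∃! μ : Measure X, IsProbabilityMeasure μ ∧
          ∀ A : Set X, MeasurableSet A → μ (Φ ⁻¹' A) = μ A) ↔
      ∀ x : X,
        Filter.liminf (fun n : ℕ =>
            (((Finset.range n).filter fun t => (Φ^[t] x : ℤ → α) 0 = B).card : ℝ) / n)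
          Filter.atTop = 1) ∧
    ((∃! μ : Measure X, IsProbabilityMeasure μ ∧
          ∀ A : Set X, MeasurableSet A → μ (Φ ⁻¹' A) = μ A) →
      ∀ ε : ℝ, 0 < ε → ∃ N : ℕ, ∀ n : ℕ, N ≤ n → ∀ x : X,
        |(((Finset.range n).filter fun t => (Φ^[t] x : ℤ → α) 0 = B).card : ℝ) / n - 1|
          < ε) := by
  have : CompactSpace X := isCompact_iff_compactSpace.mp hXclosed.isCompact
  set p : X := ⟨fun _ ↦ B, hBX⟩
  set U : Set X := {y | (y : ℤ → α) 0 = B}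
  have hU : IsClopen U :=
    (isClopen_discrete {B}).preimage ((continuous_apply 0).comp continuous_subtype_val)
  have hfreq : ∀ n x, (((Finset.range n).filter fun t ↦ (Φ^[t] x : ℤ → α) 0 = B).card : ℝ) / n =
      birkhoffAverage ℝ Φ (U.indicator (1 : X → ℝ)) n x := fun n x ↦
    (birkhoffAverage_indicator_one Φ U n x).symm
  simp only [← measurePreserving_iff_forall_measure_preimage hcont.measurable,
    existsUnique_measurePreserving_iff_of_isFixedPt hcont.measurable (Subtype.ext hq : Φ p = p),
    hfreq]
  have huniform (h : ∀ μ : Measure X, IsProbabilityMeasure μ → MeasurePreserving Φ μ μ →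
      μ = Measure.dirac p) :
      TendstoUniformly (birkhoffAverage ℝ Φ (U.indicator (1 : X → ℝ))) (fun _ ↦ 1) atTop :=
    tendstoUniformly_birkhoffAverage_of_forall_integral_eq hcont (.indicator _ hU)
      fun μ hμ hΦμ ↦ by simp [h μ hμ hΦμ, p, U]
  refine ⟨⟨fun h x ↦ ((huniform h).tendsto_at x).liminf_eq, fun h μ _ hΦμ ↦
    hΦμ.eq_dirac_of_liminf_birkhoffAverage_cylinder_eq_one hXshift hcomm hBX h⟩, fun h ε hε ↦ ?_⟩
  obtain ⟨N, hN⟩ := eventually_atTop.1 (Metric.tendstoUniformly_iff.1 (huniform h) ε hε)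
  exact ⟨N, fun n hn x ↦ by simpa [Real.dist_eq, abs_sub_comm] using hN n hn x⟩
end

section
/- Let Φ, Φ′, Φ″ be radius-1 cellular automata on finite alphabets with quiescent blank states, let S be a simulation of Φ′ by Φ and S′ a simulation of Φ″ by Φ′. If S and S′ are both rigid and connecting, then the composition S′∘S is rigid and connecting. -/
namespace CASim

variable {α α' : Type*}

/-- One-directional trajectories of the radius-1 CA with local rule `φ`:
`η t i` is the state of cell `i` at time `t`. -/
def TrajPlus (φ : α → α → α → α) : Set (ℕ → ℤ → α) :=
  {η | ∀ (t : ℕ) (i : ℤ), η (t + 1) i = φ (η t (i - 1)) (η t i) (η t (i + 1))}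

/-- Two-directional nondeterministic trajectories of `Φ̃`: at each step each cell either
obeys the local rule or becomes blank. -/
def TrajTilde (B : α) (φ : α → α → α → α) : Set (ℤ → ℤ → α) :=
  {η | ∀ t i : ℤ, η (t + 1) i = φ (η t (i - 1)) (η t i) (η t (i + 1)) ∨ η (t + 1) i = B}

/-- Two-directional nondeterministic trajectories of `Φ̂`: each cell applies the local
rule to a neighbourhood in which any subset of the three cells may be regarded as blank. -/
def TrajHat (B : α) (φ : α → α → α → α) : Set (ℤ → ℤ → α) :=
  {η | ∀ t i : ℤ, ∃ u v w : α,
    (u = η t (i - 1) ∨ u = B) ∧ (v = η t i ∨ v = B) ∧ (w = η t (i + 1) ∨ w = B) ∧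
    η (t + 1) i = φ u v w}

/-- Blockwise application of a state function `π` to a one-directional spacetime
configuration, with blocks of width `Q` and height `U`. -/
def blockApply (Q U : ℕ) (π : (Fin Q → Fin U → α) → α') (η : ℕ → ℤ → α) :
    ℕ → ℤ → α' :=
  fun t i => π fun q u => η (t * U + u.val) (i * Q + (q.val : ℤ))

/-- Blockwise application of a state function `π` to a two-directional spacetime
configuration. -/
def blockApplyZ (Q U : ℕ) (π : (Fin Q → Fin U → α) → α') (η : ℤ → ℤ → α) :
    ℤ → ℤ → α' :=
  fun t i => π fun q u => η (t * (U : ℤ) + (u.val : ℤ)) (i * (Q : ℤ) + (q.val : ℤ))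

/-- `(Q, U, (a,b), C, π)` is a simulation of the radius-1 CA `φ'` (blank `B'`) by the
radius-1 CA `φ` (blank `B`). -/
def IsSimulation (B : α) (B' : α') (φ : α → α → α → α) (φ' : α' → α' → α' → α')
    (Q U : ℕ) (a : Fin Q) (b : Fin U)
    (C : Set (Fin Q → Fin U → α)) (π : (Fin Q → Fin U → α) → α') : Prop :=
  (∀ P, P ∉ C → π P = B') ∧
  (∀ P ∈ C, P a b ≠ B) ∧
  (∀ η' ∈ TrajPlus φ', ∃ η ∈ TrajPlus φ, blockApply Q U π η = η')

/-- The coordinate `a + Q·a'` inside a block of size `Q·Q'`. -/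
def combFin {Q Q' : ℕ} (a : Fin Q) (a' : Fin Q') : Fin (Q * Q') :=
  ⟨a.val + Q * a'.val, by
    have h1 := a.isLt
    have h2 := a'.isLt
    calc a.val + Q * a'.val < Q + Q * a'.val := by omega
      _ = Q * (a'.val + 1) := by ring
      _ ≤ Q * Q' := Nat.mul_le_mul (le_refl Q) h2⟩

/-- The `Q × U` sub-block of a `QQ' × UU'` pattern at block coordinates `(q', u')`. -/
def subBlock (Q U Q' U' : ℕ) (P : Fin (Q * Q') → Fin (U * U') → α)
    (q' : Fin Q') (u' : Fin U') : Fin Q → Fin U → α :=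
  fun q u => P (combFin q q') (combFin u u')

/-- Blockwise application of `π` to a `QQ' × UU'` pattern, yielding a `Q' × U'` pattern. -/
def blockPattern (Q U Q' U' : ℕ) (π : (Fin Q → Fin U → α) → α')
    (P : Fin (Q * Q') → Fin (U * U') → α) : Fin Q' → Fin U' → α' :=
  fun q' u' => π (subBlock Q U Q' U' P q' u')



/-- Select the cell at offset `δ ∈ {-1,0,1}` from a neighbourhood `(u, v, w)`. -/
def sel (δ : ℤ) (u v w : α) : α :=
  if δ = -1 then u else if δ = 0 then v else w

/-- A state `c` is `δ`-demanding if whenever the local rule produces `c`, the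
neighbourhood cell at offset `δ` is not blank. -/
def Demanding (B : α) (φ : α → α → α → α) (δ : ℤ) (c : α) : Prop :=
  ∀ u v w : α, φ u v w = c → sel δ u v w ≠ B

/-- The edge relation of the graph `G` attached to a spacetime configuration `η`:
there is an edge from the cell `p = (i+δ, t-1)` to the cell `c = (i, t)` (cells are
`(space, time)` pairs) if both are non-blank and `η t i` is `δ`-demanding.
`Adj B φ η p c` says that `p` and `c` are adjacent via such an edge. -/
def Adj (B : α) (φ : α → α → α → α) (η : ℤ → ℤ → α) : ℤ × ℤ → ℤ × ℤ → Prop :=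
  fun p c => ∃ δ : ℤ, (δ = -1 ∨ δ = 0 ∨ δ = 1) ∧
    p.1 = c.1 + δ ∧ p.2 = c.2 - 1 ∧
    η p.2 p.1 ≠ B ∧ η c.2 c.1 ≠ B ∧ Demanding B φ δ (η c.2 c.1)

/-- Two cells are directly connected if there is a directed path between them. -/
def DirectlyConnected (B : α) (φ : α → α → α → α) (η : ℤ → ℤ → α)
    (p q : ℤ × ℤ) : Prop :=
  Relation.ReflTransGen (Adj B φ η) p q ∨ Relation.ReflTransGen (Adj B φ η) q p

/-- A simulation with state function `π` is rigid if `π(T̃ra_Φ) ⊆ T̃ra_Φ'`. -/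
def Rigid (B : α) (B' : α') (φ : α → α → α → α) (φ' : α' → α' → α' → α')
    (Q U : ℕ) (π : (Fin Q → Fin U → α) → α') : Prop :=
  ∀ η ∈ TrajTilde B φ, blockApplyZ Q U π η ∈ TrajTilde B' φ'

/-- Weak rigidity: `π(T̃ra_Φ) ⊆ T̂ra_Φ'`. -/
def WeaklyRigid (B : α) (B' : α') (φ : α → α → α → α) (φ' : α' → α' → α' → α')
    (Q U : ℕ) (π : (Fin Q → Fin U → α) → α') : Prop :=
  ∀ η ∈ TrajTilde B φ, blockApplyZ Q U π η ∈ TrajHat B' φ'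

/-- Strong rigidity: `π(T̂ra_Φ) ⊆ T̃ra_Φ'`. -/
def StronglyRigid (B : α) (B' : α') (φ : α → α → α → α) (φ' : α' → α' → α' → α')
    (Q U : ℕ) (π : (Fin Q → Fin U → α) → α') : Prop :=
  ∀ η ∈ TrajHat B φ, blockApplyZ Q U π η ∈ TrajTilde B' φ'

/-- A simulation `(Q,U,(a,b),C,π)` is connecting if for every `η ∈ T̃ra_Φ`, whenever
the cells `π(η)^t_i` and `π(η)^{t-1}_{i+δ}` are adjacent (in the graph of `π(η)`
formed with the local rule `φ'`), the base cells `η^{tU+b}_{iQ+a}` and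
`η^{(t-1)U+b}_{(i+δ)Q+a}` are directly connected in `η`. -/
def Connecting (B : α) (B' : α') (φ : α → α → α → α) (φ' : α' → α' → α' → α')
    (Q U : ℕ) (a : Fin Q) (b : Fin U) (π : (Fin Q → Fin U → α) → α') : Prop :=
  ∀ η ∈ TrajTilde B φ, ∀ i t δ : ℤ, (δ = -1 ∨ δ = 0 ∨ δ = 1) →
    Adj B' φ' (blockApplyZ Q U π η) (i + δ, t - 1) (i, t) →
    DirectlyConnected B φ η
      ((i + δ) * (Q : ℤ) + (a.val : ℤ), (t - 1) * (U : ℤ) + (b.val : ℤ))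
      (i * (Q : ℤ) + (a.val : ℤ), t * (U : ℤ) + (b.val : ℤ))

/-- Strongly connecting: the connecting condition holds for every `η ∈ T̂ra_Φ`. -/
def StronglyConnecting (B : α) (B' : α') (φ : α → α → α → α) (φ' : α' → α' → α' → α')
    (Q U : ℕ) (a : Fin Q) (b : Fin U) (π : (Fin Q → Fin U → α) → α') : Prop :=
  ∀ η ∈ TrajHat B φ, ∀ i t δ : ℤ, (δ = -1 ∨ δ = 0 ∨ δ = 1) →
    Adj B' φ' (blockApplyZ Q U π η) (i + δ, t - 1) (i, t) →
    DirectlyConnected B φ η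
      ((i + δ) * (Q : ℤ) + (a.val : ℤ), (t - 1) * (U : ℤ) + (b.val : ℤ))
      (i * (Q : ℤ) + (a.val : ℤ), t * (U : ℤ) + (b.val : ℤ))

end CASim

section Aux
open CASim

variable {α α' : Type*}

lemma adj_time {B : α} {φ : α → α → α → α} {η : ℤ → ℤ → α} {p c : ℤ × ℤ}
    (h : Adj B φ η p c) : p.2 = c.2 - 1 := by
  obtain ⟨δ, _, _, h2, _⟩ := h
  exact h2

lemma rtg_time {B : α} {φ : α → α → α → α} {η : ℤ → ℤ → α} {x y : ℤ × ℤ}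
    (h : Relation.ReflTransGen (Adj B φ η) x y) : x.2 ≤ y.2 := by
  induction h with
  | refl => exact le_rfl
  | tail _ hedge ih =>
      have := adj_time hedge
      omega

lemma dc_forward {B : α} {φ : α → α → α → α} {η : ℤ → ℤ → α} {x y : ℤ × ℤ}
    (h : DirectlyConnected B φ η x y) (ht : x.2 < y.2) :
    Relation.ReflTransGen (Adj B φ η) x y := by
  rcases h with h | h
  · exact h
  · have := rtg_time h; omega

lemma lift_path {B : α} {B' : α'} {φ : α → α → α → α} {φ' : α' → α' → α' → α'}
    {Q U : ℕ} {a : Fin Q} {b : Fin U} {π : (Fin Q → Fin U → α) → α'}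
    (hSc : Connecting B B' φ φ' Q U a b π)
    {η : ℤ → ℤ → α} (hη : η ∈ TrajTilde B φ) {x y : ℤ × ℤ}
    (h : Relation.ReflTransGen (Adj B' φ' (blockApplyZ Q U π η)) x y) :
    Relation.ReflTransGen (Adj B φ η)
      (x.1 * (Q : ℤ) + (a.val : ℤ), x.2 * (U : ℤ) + (b.val : ℤ))
      (y.1 * (Q : ℤ) + (a.val : ℤ), y.2 * (U : ℤ) + (b.val : ℤ)) := by
  have hU : (0 : ℤ) < (U : ℤ) := by exact_mod_cast b.pos
  induction h with
  | refl => exact Relation.ReflTransGen.refl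
  | @tail m c _ hedge ih =>
      refine ih.trans ?_
      have hedge' := hedge
      obtain ⟨δ, hδ, h1, h2, _⟩ := hedge
      have hadj : Adj B' φ' (blockApplyZ Q U π η) (c.1 + δ, c.2 - 1) (c.1, c.2) := by
        have hm : m = (c.1 + δ, c.2 - 1) := Prod.ext h1 h2
        rw [hm] at hedge'
        exact hedge'
      have hd := hSc η hη c.1 c.2 δ hδ hadj
      have hlt : (c.2 - 1) * (U : ℤ) + (b.val : ℤ) < c.2 * (U : ℤ) + (b.val : ℤ) := by
        nlinarith
      have hpath := dc_forward hd hlt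
      have hx : (m.1 * (Q : ℤ) + (a.val : ℤ), m.2 * (U : ℤ) + (b.val : ℤ))
          = ((c.1 + δ) * (Q : ℤ) + (a.val : ℤ), (c.2 - 1) * (U : ℤ) + (b.val : ℤ)) := by
        rw [h1, h2]
      rw [hx]
      exact hpath

lemma blockApplyZ_comp (Q U Q' U' : ℕ) (π : (Fin Q → Fin U → α) → α')
    {α'' : Type*} (π' : (Fin Q' → Fin U' → α') → α'') (η : ℤ → ℤ → α) :
    blockApplyZ (Q * Q') (U * U') (fun P => π' (blockPattern Q U Q' U' π P)) η
      = blockApplyZ Q' U' π' (blockApplyZ Q U π η) := by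
  funext t i
  show π' (fun q' u' => π (fun q u =>
      η (t * (((U * U' : ℕ) : ℤ)) + (((combFin u u').val : ℕ) : ℤ))
        (i * (((Q * Q' : ℕ) : ℤ)) + (((combFin q q').val : ℕ) : ℤ))))
    = π' (fun q' u' => π (fun q u =>
      η ((t * (U' : ℤ) + (u'.val : ℤ)) * (U : ℤ) + (u.val : ℤ))
        ((i * (Q' : ℤ) + (q'.val : ℤ)) * (Q : ℤ) + (q.val : ℤ))))
  congr 1
  funext q' u'
  congr 1
  funext q u
  congr 1
  · simp only [combFin]
    push_cast
    ring
  · simp only [combFin]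
    push_cast
    ring

end Aux

open CASim in
/-- If `S` (a simulation of `Φ'` by `Φ`) and `S'` (a simulation of `Φ''`
by `Φ'`) are both rigid and connecting, then so is the composition `S' ∘ S`. -/
theorem simulation_comp_rigid_connecting {α α' α'' : Type*}
    (B : α) (B' : α') (B'' : α'')
    (φ : α → α → α → α) (φ' : α' → α' → α' → α') (φ'' : α'' → α'' → α'' → α'')
    (hB : φ B B B = B) (hB' : φ' B' B' B' = B') (hB'' : φ'' B'' B'' B'' = B'')
    (Q U : ℕ) (a : Fin Q) (b : Fin U)
    (C : Set (Fin Q → Fin U → α)) (π : (Fin Q → Fin U → α) → α')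
    (Q' U' : ℕ) (a' : Fin Q') (b' : Fin U')
    (C' : Set (Fin Q' → Fin U' → α')) (π' : (Fin Q' → Fin U' → α') → α'')
    (hS : IsSimulation B B' φ φ' Q U a b C π)
    (hS' : IsSimulation B' B'' φ' φ'' Q' U' a' b' C' π')
    (hSr : Rigid B B' φ φ' Q U π)
    (hSc : Connecting B B' φ φ' Q U a b π)
    (hS'r : Rigid B' B'' φ' φ'' Q' U' π')
    (hS'c : Connecting B' B'' φ' φ'' Q' U' a' b' π') :
    Rigid B B'' φ φ'' (Q * Q') (U * U')
        (fun P => π' (blockPattern Q U Q' U' π P)) ∧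
    Connecting B B'' φ φ'' (Q * Q') (U * U') (combFin a a') (combFin b b')
        (fun P => π' (blockPattern Q U Q' U' π P)) := by
  have key := fun η => blockApplyZ_comp Q U Q' U' π π' η
  constructor
  · intro η hη
    rw [key η]
    exact hS'r _ (hSr η hη)
  · intro η hη i t δ hδ hadj
    rw [key η] at hadj
    have hζ : blockApplyZ Q U π η ∈ TrajTilde B' φ' := hSr η hη
    have h1 := hS'c _ hζ i t δ hδ hadj
    have hU' : (0 : ℤ) < (U' : ℤ) := by exact_mod_cast b'.pos
    have hlt : ((i + δ) * (Q' : ℤ) + (a'.val : ℤ), (t - 1) * (U' : ℤ) + (b'.val : ℤ)).2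
        < ((i) * (Q' : ℤ) + (a'.val : ℤ), t * (U' : ℤ) + (b'.val : ℤ)).2 := by
      simp only
      nlinarith
    have hpath := dc_forward h1 hlt
    have h2 := lift_path hSc hη hpath
    left
    have e1 : ((i + δ) * (Q' : ℤ) + (a'.val : ℤ)) * (Q : ℤ) + (a.val : ℤ)
        = (i + δ) * ((Q * Q' : ℕ) : ℤ) + (((combFin a a').val : ℕ) : ℤ) := by
      simp only [combFin]
      push_cast
      ring
    have e2 : ((t - 1) * (U' : ℤ) + (b'.val : ℤ)) * (U : ℤ) + (b.val : ℤ)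
        = (t - 1) * ((U * U' : ℕ) : ℤ) + (((combFin b b').val : ℕ) : ℤ) := by
      simp only [combFin]
      push_cast
      ring
    have e3 : (i * (Q' : ℤ) + (a'.val : ℤ)) * (Q : ℤ) + (a.val : ℤ)
        = i * ((Q * Q' : ℕ) : ℤ) + (((combFin a a').val : ℕ) : ℤ) := by
      simp only [combFin]
      push_cast
      ring
    have e4 : (t * (U' : ℤ) + (b'.val : ℤ)) * (U : ℤ) + (b.val : ℤ)
        = t * ((U * U' : ℕ) : ℤ) + (((combFin b b').val : ℕ) : ℤ) := by
      simp only [combFin]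
      push_cast
      ring
    simpa only [e1, e2, e3, e4] using h2
end

section
/- Let Φ : α^ℤ → α^ℤ be a cellular automaton on a finite alphabet α with quiescent state B. If for every x ∈ α^ℤ there exists n ∈ ℕ such that Φ^n(x) lies in the Besicovitch class of B^∞ (i.e., d_B(Φ^n(x), B^∞) = 0), then Φ is nilpotent. -/
/-!
By compactness of `α^ℤ`, a cellular automaton has a radius `r`: `Φ x i` depends only on `x` on
`[i - r, i + r]`, so `Φ^n x i` depends only on `x` on `[i - rn, i + rn]`. If `Φ` is not
nilpotent, then for every `n` some window of width `2rn + 1` produces a cell different from `B`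
after `n` steps. Repeating the `n`-th window periodically over the dyadic blocks
`[2^t, 2^(t+1))` with `(Nat.unpair t).1 = n` (infinitely many blocks for each `n`) gives a single
configuration `z` such that, for every `n` and infinitely many `N`, `Φ^n z` differs from `B` on
at least a `1/(6(2rn+1))` fraction of `[-N, N]`. Hence `d_B(Φ^n z, B^∞) > 0` for all `n`.
-/

open Filter

/-- The Besicovitch pseudometric on `α^ℤ`:
`d_B(x,y) = limsup_{n→∞} |{i ∈ [-n,n] : x_i ≠ y_i}| / (2n+1)`. -/
noncomputable def besicovitchDist {α : Type} [DecidableEq α] (x y : ℤ → α) : ℝ :=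
  Filter.limsup (fun n : ℕ =>
      (((Finset.Icc (-(n : ℤ)) (n : ℤ)).filter fun i => x i ≠ y i).card : ℝ) /
        (2 * (n : ℝ) + 1))
    Filter.atTop

section Copies

variable {β : Type*}

def FrequentlyDenseCopies (z w : ℕ → β) (L c : ℕ) : Prop :=
  ∃ᶠ N in atTop, ∃ a J : ℕ, a + J * L ≤ N ∧ 2 * N + 1 ≤ c * (J * L) ∧
    ∀ j < J, ∀ m < L, z (a + j * L + m) = w m

def dyadicBlocks (u : ℕ → ℕ → β) (L : ℕ → ℕ) (i : ℕ) : β :=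
  u (Nat.unpair (Nat.log 2 i)).1 ((i - 2 ^ Nat.log 2 i) % L (Nat.unpair (Nat.log 2 i)).1)

variable {u : ℕ → ℕ → β} {L : ℕ → ℕ}

theorem dyadicBlocks_apply {t n j m : ℕ} (hn : (Nat.unpair t).1 = n) (hm : m < L n)
    (hj : (j + 1) * L n ≤ 2 ^ t) : dyadicBlocks u L (2 ^ t + j * L n + m) = u n m := by
  rw [add_one_mul] at hj
  have hlog : Nat.log 2 (2 ^ t + j * L n + m) = t :=
    Nat.log_eq_of_pow_le_of_lt_pow (by omega) (by rw [pow_succ]; omega)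
  rw [dyadicBlocks, hlog, hn, add_assoc, Nat.add_sub_cancel_left, mul_comm, Nat.mul_add_mod,
    Nat.mod_eq_of_lt hm]

theorem frequentlyDenseCopies_dyadicBlocks (hL : ∀ n, 0 < L n) (n : ℕ) :
    FrequentlyDenseCopies (dyadicBlocks u L) (u n) (L n) 6 := by
  rw [FrequentlyDenseCopies, frequently_atTop]
  intro N₀
  set t := Nat.pair n (N₀ + 2 * L n)
  have hn : (Nat.unpair t).1 = n := by simp [t]
  have ht : N₀ + 2 * L n < 2 ^ t := (Nat.right_le_pair _ _).trans_lt Nat.lt_two_pow_self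
  set J := 2 ^ t / L n
  have hJ : J * L n ≤ 2 ^ t := Nat.div_mul_le_self _ _
  have hJ' : 2 ^ t < J * L n + L n := Nat.lt_div_mul_add (hL n)
  have hJ2 : 2 ≤ J := (Nat.le_div_iff_mul_le (hL n)).2 (by omega)
  refine ⟨2 ^ (t + 1), by rw [pow_succ]; omega, 2 ^ t, J, by rw [pow_succ]; omega,
    by rw [pow_succ]; nlinarith, fun j hj m hm => dyadicBlocks_apply hn hm ?_⟩
  calc (j + 1) * L n ≤ J * L n := Nat.mul_le_mul_right _ hj
    _ ≤ 2 ^ t := hJ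

end Copies

theorem le_besicovitchDist {α : Type} [DecidableEq α] {x y : ℤ → α} {δ : ℝ}
    (h : ∃ᶠ N : ℕ in atTop,
      δ * (2 * N + 1) ≤ (((Finset.Icc (-(N : ℤ)) N).filter fun i => x i ≠ y i).card : ℝ)) :
    δ ≤ besicovitchDist x y := by
  refine le_limsup_of_frequently_le (h.mono fun N hN => (le_div_iff₀ (by positivity)).2 hN)
    (isBoundedUnder_of ⟨1, fun N => (div_le_one (by positivity)).2 ?_⟩)
  have hcard : (Finset.Icc (-(N : ℤ)) N).card = 2 * N + 1 := by simp only [Int.card_Icc]; omega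
  exact_mod_cast hcard ▸ Finset.card_filter_le _ _

namespace CellularAutomaton

section

variable {α : Type*}

def shift (m : ℤ) (x : ℤ → α) : ℤ → α := fun i => x (i + m)

def HasRadius (Φ : (ℤ → α) → ℤ → α) (r : ℕ) : Prop :=
  ∀ x y : ℤ → α, ∀ i, (∀ j, |j - i| ≤ (r : ℤ) → x j = y j) → Φ x i = Φ y i

variable {Φ : (ℤ → α) → ℤ → α}

@[simp] theorem shift_zero : shift 0 = (id : (ℤ → α) → ℤ → α) := by
  funext x i; simp [shift]

theorem shift_add (a b : ℤ) : shift (a + b) = shift a ∘ shift b (α := α) := by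
  funext x i; simp [shift, add_assoc]

theorem commute_shift (h : Function.Commute Φ (shift 1)) (m : ℤ) :
    Function.Commute Φ (shift m) := by
  have h' : Function.Commute Φ (shift (-1)) :=
    h.inverses_right (fun x => by funext i; simp [shift]) (fun x => by funext i; simp [shift])
  induction m using Int.induction_on with
  | zero => simpa using Function.Commute.id_right
  | succ k ih => simpa only [shift_add] using ih.comp_right h
  | pred k ih => simpa only [sub_eq_add_neg, shift_add] using ih.comp_right h'

theorem HasRadius.iterate {r : ℕ} (hr : HasRadius Φ r) (n : ℕ) : HasRadius Φ^[n] (r * n) := by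
  induction n with
  | zero => exact fun x y i hxy => hxy i (by simp)
  | succ n ih =>
    intro x y i hxy
    rw [Function.iterate_succ_apply', Function.iterate_succ_apply']
    refine hr _ _ i fun j hj => ih x y j fun k hk => hxy k ?_
    rw [abs_le] at *
    push_cast at *
    constructor <;> linarith

theorem HasRadius.apply_eq_of_eq_translate {r : ℕ} (hr : HasRadius Φ r) {d : ℤ}
    (hd : Function.Commute Φ (shift d)) {x y : ℤ → α} {c : ℤ}
    (hxy : ∀ j, |j - c| ≤ (r : ℤ) → x j = y (j + d)) : Φ x c = Φ y (c + d) :=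
  (hr x (shift d y) c hxy).trans (congrFun (hd y) c)

theorem hasRadius_of_apply_zero (h : Function.Commute Φ (shift 1)) {r : ℕ}
    (h0 : ∀ x y : ℤ → α, (∀ j, |j| ≤ (r : ℤ) → x j = y j) → Φ x 0 = Φ y 0) :
    HasRadius Φ r := by
  intro x y i hxy
  have hx := congrFun (commute_shift h i x) 0
  have hy := congrFun (commute_shift h i y) 0
  simp only [shift, zero_add] at hx hy
  rw [← hx, ← hy]
  exact h0 _ _ fun j hj => hxy (j + i) (by simpa using hj)

theorem exists_radius_apply_zero [TopologicalSpace α] [DiscreteTopology α] [Finite α]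
    (hΦ : Continuous Φ) :
    ∃ r : ℕ, ∀ x y : ℤ → α, (∀ j, |j| ≤ (r : ℤ) → x j = y j) → Φ x 0 = Φ y 0 := by
  -- The sets `U r` are open, increasing and cover `α^ℤ`, so by compactness one of them is all.
  let U : ℕ → Set (ℤ → α) := fun r =>
    {x | ∀ y, (∀ j, |j| ≤ (r : ℤ) → y j = x j) → Φ y 0 = Φ x 0}
  have hmono : Monotone U := fun r s hrs x hx y hy =>
    hx y fun j hj => hy j (hj.trans (by exact_mod_cast hrs))
  have hopen : ∀ r, IsOpen (U r) := by
    intro r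
    rw [isOpen_iff_forall_mem_open]
    intro x hx
    have hwin : ∀ j, |j| ≤ (r : ℤ) → j ∈ (Finset.Icc (-(r : ℤ)) r : Set ℤ) := by
      intro j hj; simpa [abs_le] using hj
    refine ⟨(Finset.Icc (-(r : ℤ)) r : Set ℤ).pi fun j => {x j}, ?_,
      isOpen_set_pi (Finset.finite_toSet _) fun _ _ => isOpen_discrete _, fun j _ => rfl⟩
    intro y hy z hz
    rw [hx z fun j hj => (hz j hj).trans (hy j (hwin j hj)), hx y fun j hj => hy j (hwin j hj)]
  have hcover : Set.univ ⊆ ⋃ r, U r := by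
    intro x _
    have hfib : IsOpen ((fun y => Φ y 0) ⁻¹' {Φ x 0}) :=
      ((continuous_apply 0).comp hΦ).isOpen_preimage _ (isOpen_discrete _)
    obtain ⟨I, u, hu, hIu⟩ := isOpen_pi_iff.1 hfib x rfl
    refine Set.mem_iUnion.2 ⟨I.sup Int.natAbs, fun y hy => hIu fun j hj => ?_⟩
    rw [hy j (by rw [Int.abs_eq_natAbs]; exact_mod_cast Finset.le_sup hj)]
    exact (hu j hj).2
  obtain ⟨r, hr⟩ := isCompact_univ.elim_directed_cover U hopen hcover hmono.directed_le
  exact ⟨r, fun x y hxy => hr (Set.mem_univ y) x hxy⟩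

theorem exists_hasRadius [TopologicalSpace α] [DiscreteTopology α] [Finite α]
    (hΦ : Continuous Φ) (h : Function.Commute Φ (shift 1)) : ∃ r, HasRadius Φ r :=
  (exists_radius_apply_zero hΦ).imp fun _ => hasRadius_of_apply_zero h

end

theorem HasRadius.le_besicovitchDist_iterate {α : Type} [DecidableEq α]
    {Φ : (ℤ → α) → ℤ → α} {r : ℕ} (hr : HasRadius Φ r) (hΦ : Function.Commute Φ (shift 1))
    {n c : ℕ} {x z : ℤ → α} {p : ℤ} {b : α} (hx : Φ^[n] x p ≠ b)
    (hz : FrequentlyDenseCopies (fun i : ℕ => z i) (fun m => x (p - (r * n : ℕ) + m))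
      (2 * (r * n) + 1) c) :
    1 / ((c * (2 * (r * n) + 1) : ℕ) : ℝ) ≤ besicovitchDist (Φ^[n] z) fun _ => b := by
  have hrad := hr.iterate n
  generalize r * n = R at hrad hz ⊢
  generalize hL : 2 * R + 1 = L at hz ⊢
  refine le_besicovitchDist (hz.mono ?_)
  rintro N ⟨a, J, hfit, hdense, hcopy⟩
  have halive : ∀ j < J, Φ^[n] z (a + j * L + R : ℕ) ≠ b := by
    intro j hj
    rw [hrad.apply_eq_of_eq_translate ((commute_shift hΦ _).iterate_left n) (y := x)
      fun k hk => ?_, add_sub_cancel]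
    · exact hx
    rw [abs_le] at hk
    obtain ⟨m, rfl⟩ : ∃ m : ℕ, k = (a + j * L + m : ℕ) := ⟨(k - (a + j * L : ℕ)).toNat, by omega⟩
    exact (hcopy j hj m (by omega)).trans (congrArg x (by omega))
  have hsub : (Finset.range J).image (fun j => ((a + j * L + R : ℕ) : ℤ)) ⊆
      (Finset.Icc (-(N : ℤ)) N).filter fun i => Φ^[n] z i ≠ b := by
    intro i hi
    obtain ⟨j, hj, rfl⟩ := Finset.mem_image.1 hi
    rw [Finset.mem_range] at hj
    have hjL : j * L + L ≤ J * L := by rw [← add_one_mul]; exact Nat.mul_le_mul_right L hj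
    exact Finset.mem_filter.2 ⟨Finset.mem_Icc.2 ⟨by omega, by omega⟩, halive j hj⟩
  have hinj : Function.Injective fun j => ((a + j * L + R : ℕ) : ℤ) :=
    StrictMono.injective fun i j hij => Nat.cast_lt.2 (by nlinarith)
  have hcard := Finset.card_le_card hsub
  rw [Finset.card_image_of_injective _ hinj, Finset.card_range] at hcard
  have hcL : 0 < c * L := Nat.pos_of_ne_zero fun h => by
    rw [mul_left_comm, h, mul_zero] at hdense; omega
  rw [one_div_mul_eq_div, div_le_iff₀ (by positivity)]
  exact_mod_cast show 2 * N + 1 ≤ _ * (c * L) by nlinarith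

end CellularAutomaton

open CellularAutomaton

theorem nilpotent_of_besicovitch_class_reached_general
    {α : Type} [Fintype α] [DecidableEq α] [TopologicalSpace α] [DiscreteTopology α]
    (B : α) (Φ : (ℤ → α) → (ℤ → α))
    (hcont : Continuous Φ)
    (hcomm : ∀ x : ℤ → α, Φ (fun i => x (i + 1)) = fun i => Φ x (i + 1))
    (h : ∀ x : ℤ → α, ∃ n : ℕ, besicovitchDist (Φ^[n] x) (fun _ => B) = 0) :
    ∃ n : ℕ, ∀ x : ℤ → α, Φ^[n] x = fun _ => B := by
  by_contra! hΦ
  have hwitness : ∀ n, ∃ x p, Φ^[n] x p ≠ B := fun n =>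
    (hΦ n).imp fun _ => Function.ne_iff.1
  choose X P hXP using hwitness
  obtain ⟨r, hr⟩ := exists_hasRadius hcont hcomm
  let u : ℕ → ℕ → α := fun n m => X n (P n - (r * n : ℕ) + m)
  let z : ℤ → α := fun i => dyadicBlocks u (fun n => 2 * (r * n) + 1) i.toNat
  obtain ⟨n, hn⟩ := h z
  have hpos := hr.le_besicovitchDist_iterate hcomm (hXP n) (z := z)
    (frequentlyDenseCopies_dyadicBlocks (L := fun n => 2 * (r * n) + 1)
      (fun _ => Nat.succ_pos _) n)
  rw [hn] at hpos
  exact (one_div_pos.2 (by positivity)).not_ge hpos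

/-- If every configuration of a cellular automaton `Φ` with quiescent
state `B` eventually reaches the Besicovitch class of `B^∞`, then `Φ` is nilpotent. -/
theorem nilpotent_of_besicovitch_class_reached
    {α : Type} [Fintype α] [DecidableEq α] [TopologicalSpace α] [DiscreteTopology α]
    (B : α) (Φ : (ℤ → α) → (ℤ → α))
    (hcont : Continuous Φ)
    (hcomm : ∀ x : ℤ → α, Φ (fun i => x (i + 1)) = fun i => Φ x (i + 1))
    (hq : Φ (fun _ => B) = fun _ => B)
    (h : ∀ x : ℤ → α, ∃ n : ℕ, besicovitchDist (Φ^[n] x) (fun _ => B) = 0) :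
    ∃ n : ℕ, ∀ x : ℤ → α, Φ^[n] x = fun _ => B :=
  nilpotent_of_besicovitch_class_reached_general B Φ hcont hcomm h
end
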